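/- arXiv:2107.14319 — 4 statements merged into one kernel-verified Lean document; each statement's English description precedes it below -/
import Mathlib

section
/- In the ring of formal power series ℚ[[t]], let f = (1+3t)^g · ((1+2t)^{-1})^2, where (1+2t)^{-1} denotes the (well-defined) inverse of the invertible power series 1+2t. Then for every natural number g the coefficient of t^1 in f equals 3g - 4, and for every g ≥ 2 the coefficient of t^{g-2} in f equals (3^g - 2g - 1)/4. -/
/-!
Write `1 + 3t = u + t` with `u = 1 + 2t` and expand binomially:
`(1 + 3t)^(m+2) u⁻² = ∑ⱼ C(m+2, j) tʲ u^(m-j)` up to the terms `j = m+1, m+2`, which are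
divisible by `t^(m+1)`. The polynomial `u^(m-j)` has top coefficient `2^(m-j)`, so the
coefficient of `t^m` is `∑_{j ≤ m} C(m+2, j) 2^(m-j)`, and `4` times this is the binomial
expansion of `3^(m+2)` without its last two terms. The coefficient of `t` only sees first
order terms: `3g` from `(1 + 3t)^g` and `-2·2` from `u⁻²`.
-/

open Finset

theorem sum_range_choose_mul_pow_mul_sq {R : Type*} [CommRing R] (a : R) (m : ℕ) :
    (∑ j ∈ range (m + 1), ((m + 2).choose j : R) * a ^ (m - j)) * a ^ 2
      = (a + 1) ^ (m + 2) - (m + 2) * a - 1 := by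
  rw [add_comm a, add_pow, sum_range_succ _ (m + 2), sum_range_succ _ (m + 1), sum_mul]
  have shift : ∀ j ∈ range (m + 1), ((m + 2).choose j : R) * a ^ (m - j) * a ^ 2
      = 1 ^ j * a ^ (m + 2 - j) * (m + 2).choose j := by
    intro j hj
    rw [one_pow, show m + 2 - j = m - j + 2 by have := mem_range.mp hj; omega, pow_add]
    ring
  rw [sum_congr rfl shift]
  simp only [one_pow, one_mul, Nat.reduceSubDiff, add_tsub_cancel_left, pow_one,
    Nat.choose_succ_self_right, Nat.cast_add, Nat.cast_one, tsub_self, pow_zero, mul_one,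
    Nat.choose_self]
  ring

namespace PowerSeries

theorem coeff_one_inv {k : Type*} [Field k] (φ : k⟦X⟧) :
    coeff 1 φ⁻¹ = -coeff 1 φ * (constantCoeff φ)⁻¹ ^ 2 := by
  by_cases h : constantCoeff φ = 0
  · simp [h, inv_eq_zero.mpr h]
  · have := congrArg (coeff 1) (PowerSeries.mul_inv_cancel φ h)
    rw [coeff_one_mul, constantCoeff_inv, coeff_one, if_neg one_ne_zero] at this
    field_simp at this ⊢
    linear_combination this

theorem coeff_self_one_add_C_mul_X_pow {R : Type*} [CommRing R] (a : R) (n : ℕ) :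
    coeff n ((1 + C a * X) ^ n) = a ^ n := by
  have : (1 + C a * X : R⟦X⟧) ^ n = rescale a ((1 + X) ^ n) := by
    rw [map_pow, map_add, map_one, rescale_X]
  rw [this, coeff_rescale, ← Polynomial.coe_X, ← Polynomial.coe_one, ← Polynomial.coe_add,
    ← Polynomial.coe_pow, Polynomial.coeff_coe, Polynomial.coeff_one_add_X_pow, Nat.choose_self,
    Nat.cast_one, mul_one]

theorem coeff_add_X_pow_mul_inv_pow {k : Type*} [Field k] (a : k) (m e : ℕ) :
    coeff m ((1 + C a * X + X) ^ (m + e) * (1 + C a * X)⁻¹ ^ e)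
      = ∑ j ∈ range (m + 1), ((m + e).choose j : k) * a ^ (m - j) := by
  set u : k⟦X⟧ := 1 + C a * X
  have hu : u * u⁻¹ = 1 := PowerSeries.mul_inv_cancel u (by simp [u])
  have term (j : ℕ) :
      coeff m (X ^ j * u ^ (m + e - j) * ((m + e).choose j : k⟦X⟧) * u⁻¹ ^ e)
      = if j ≤ m then ((m + e).choose j : k) * a ^ (m - j) else 0 := by
    rw [← map_natCast (C (R := k)), mul_right_comm, mul_comm, ← mul_assoc, mul_assoc,
      coeff_C_mul, mul_assoc, coeff_X_pow_mul']
    split_ifs with hj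
    · rw [show m + e - j = m - j + e by omega, pow_add, mul_assoc, ← mul_pow, hu, one_pow,
        mul_one, coeff_self_one_add_C_mul_X_pow]
    · rw [mul_zero]
  have support : (range (m + e + 1)).filter (· ≤ m) = range (m + 1) := by
    ext j; simp only [mem_filter, mem_range]; omega
  rw [add_comm u, add_pow, sum_mul, map_sum]
  simp only [term]
  rw [← sum_filter, support]

end PowerSeries

open PowerSeries in
/-- In `ℚ[[t]]`, let `f = (1+3t)^g * ((1+2t)⁻¹)^2`, where `(1+2t)⁻¹` is the inverse of the
invertible power series `1+2t`.  Then the coefficient of `t` in `f` is `3g - 4`, and for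
`g ≥ 2` the coefficient of `t^(g-2)` in `f` is `(3^g - 2g - 1)/4`. -/
theorem chern_class_power_series_coeffs (g : ℕ) :
    (PowerSeries.coeff (R := ℚ) 1)
        ((1 + 3 * PowerSeries.X) ^ g * ((1 + 2 * PowerSeries.X)⁻¹) ^ 2)
      = 3 * (g : ℚ) - 4 ∧
    (2 ≤ g →
      (PowerSeries.coeff (R := ℚ) (g - 2))
          ((1 + 3 * PowerSeries.X) ^ g * ((1 + 2 * PowerSeries.X)⁻¹) ^ 2)
        = ((3 : ℚ) ^ g - 2 * g - 1) / 4) := by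
  have two_eq_C : (2 : ℚ⟦X⟧) = C 2 := (map_ofNat C 2).symm
  constructor
  · rw [coeff_one_mul, coeff_one_pow, coeff_one_pow, coeff_one_inv]
    simp only [map_add, coeff_one, coeff_succ_mul_X, coeff_zero_eq_constantCoeff, map_ofNat,
      constantCoeff_one, map_mul, constantCoeff_X, map_pow, constantCoeff_inv,
      Nat.add_one_sub_one]
    norm_num
    ring
  · intro hg
    obtain ⟨m, rfl⟩ := Nat.exists_eq_add_of_le' hg
    have three_X : (1 + 3 * X : ℚ⟦X⟧) = 1 + C 2 * X + X := by rw [← two_eq_C]; ring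
    rw [Nat.add_sub_cancel, three_X, two_eq_C, coeff_add_X_pow_mul_inv_pow,
      eq_div_iff four_ne_zero]
    have := sum_range_choose_mul_pow_mul_sq (2 : ℚ) m
    push_cast
    linear_combination this
end

section
/- Let k be a field, V a finite-dimensional k-vector space of dimension at least 1, and G a finite group. Let Z ⊆ GL(V) denote the subgroup of scalar automorphisms, i.e. the range of the homomorphism k^× → GL(V) sending c to c·id_V. Suppose ρ : G → GL(V)/Z is a group homomorphism and there exists a nonzero vector v ∈ V such that for every g ∈ G, every A ∈ GL(V) whose class in GL(V)/Z equals ρ(g) satisfies A(v) ∈ k·v (i.e. A(v) = c·v for some c ∈ k). Then there exists a group homomorphism ρ̃ : G → GL(V) such that the composition of ρ̃ with the quotient map GL(V) → GL(V)/Z equals ρ, and moreover ρ̃(g)(v) = v for all g ∈ G. -/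
/-- The subgroup `Z ⊆ GL(V) = (End k V)ˣ` of scalar automorphisms: the range of the
homomorphism `kˣ → GL(V)` sending `c` to `c · id_V`. -/
def scalarSubgroup (k V : Type*) [Field k] [AddCommGroup V] [Module k V] :
    Subgroup (Module.End k V)ˣ :=
  (Units.map (algebraMap k (Module.End k V)).toMonoidHom).range

instance scalarSubgroup_normal (k V : Type*) [Field k] [AddCommGroup V] [Module k V] :
    (scalarSubgroup k V).Normal := by
  constructor
  intro n hn g
  obtain ⟨c, rfl⟩ := hn
  refine ⟨c, ?_⟩
  refine Units.ext ?_
  simp only [Units.val_mul, Units.coe_map, RingHom.toMonoidHom_eq_coe, MonoidHom.coe_coe]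
  calc (algebraMap k (Module.End k V)) (c : k)
      = (g : Module.End k V) * ((g⁻¹ : (Module.End k V)ˣ) : Module.End k V) *
          (algebraMap k (Module.End k V)) (c : k) := by
        rw [← Units.val_mul, mul_inv_cancel, Units.val_one, one_mul]
    _ = (g : Module.End k V) * ((algebraMap k (Module.End k V)) (c : k) *
          ((g⁻¹ : (Module.End k V)ˣ) : Module.End k V)) := by
        rw [mul_assoc, Algebra.commutes]
    _ = (g : Module.End k V) * (algebraMap k (Module.End k V)) (c : k) *
          ((g⁻¹ : (Module.End k V)ˣ) : Module.End k V) := by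
        rw [mul_assoc]

/-- A projective representation `ρ : G → GL(V)/Z` with an invariant line `k·v` (every lift of
every `ρ(g)` sends `v` to a scalar multiple of `v`) lifts to a linear representation
`ρ̃ : G → GL(V)` with `ρ̃(g)(v) = v` for all `g`: a projective representation with a fixed
point is strictly linear. -/
theorem projective_rep_with_fixed_vector_lifts
    (k V G : Type*) [Field k] [AddCommGroup V] [Module k V] [FiniteDimensional k V]
    [Group G] [Finite G] (hdim : 1 ≤ Module.finrank k V)
    (ρ : G →* (Module.End k V)ˣ ⧸ scalarSubgroup k V) (v : V) (hv : v ≠ 0)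
    (hfix : ∀ (g : G) (A : (Module.End k V)ˣ),
        QuotientGroup.mk' (scalarSubgroup k V) A = ρ g → ∃ c : k, A.val v = c • v) :
    ∃ ρL : G →* (Module.End k V)ˣ,
      (QuotientGroup.mk' (scalarSubgroup k V)).comp ρL = ρ ∧
        ∀ g : G, (ρL g).val v = v := by
  -- Uniqueness of a lift fixing `v`.
  have uniq : ∀ B B' : (Module.End k V)ˣ,
      QuotientGroup.mk' (scalarSubgroup k V) B = QuotientGroup.mk' (scalarSubgroup k V) B' →
      B.val v = v → B'.val v = v → B = B' := by
    intro B B' hBB hB hB'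
    have h : B⁻¹ * B' ∈ scalarSubgroup k V :=
      QuotientGroup.eq.mp (by simpa [QuotientGroup.mk'_apply] using hBB)
    obtain ⟨c, hc⟩ := h
    have hBval : B'.val = B.val * algebraMap k (Module.End k V) (c : k) := by
      have := congrArg (fun u : (Module.End k V)ˣ => (B * u).val) hc
      simpa [mul_assoc] using this.symm
    have hcv : (c : k) • v = v := by
      have := congrArg (fun f : Module.End k V => f v) hBval
      simp only [Module.End.mul_apply, Module.algebraMap_end_apply, map_smul, hB] at this
      rw [hB'] at this
      exact this.symm
    have hc1 : (c : k) = 1 := by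
      have h0 : ((c : k) - 1) • v = 0 := by rw [sub_smul, hcv, one_smul, sub_self]
      exact sub_eq_zero.mp ((smul_eq_zero.mp h0).resolve_right hv)
    apply Units.ext
    rw [hBval, hc1, map_one, mul_one]
  -- Existence of a lift fixing `v`.
  have key : ∀ g : G, ∃ B : (Module.End k V)ˣ,
      QuotientGroup.mk' (scalarSubgroup k V) B = ρ g ∧ B.val v = v := by
    intro g
    obtain ⟨A, hA⟩ := QuotientGroup.mk'_surjective (scalarSubgroup k V) (ρ g)
    obtain ⟨c, hc⟩ := hfix g A hA
    have hc0 : c ≠ 0 := by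
      intro h
      apply hv
      have : A.val v = 0 := by rw [hc, h, zero_smul]
      have h2 := congrArg (fun w => (A⁻¹).val w) this
      simp only [map_zero] at h2
      rw [← Module.End.mul_apply, ← Units.val_mul, inv_mul_cancel, Units.val_one,
        Module.End.one_apply] at h2
      exact h2
    set u : (Module.End k V)ˣ :=
      Units.map (algebraMap k (Module.End k V)).toMonoidHom (Units.mk0 c hc0) with hu
    have humem : u ∈ scalarSubgroup k V := ⟨Units.mk0 c hc0, rfl⟩
    refine ⟨u⁻¹ * A, ?_, ?_⟩
    · rw [map_mul, map_inv, hA]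
      have : QuotientGroup.mk' (scalarSubgroup k V) u = 1 :=
        (QuotientGroup.eq_one_iff u).mpr humem
      rw [this, inv_one, one_mul]
    · have huinv : (u⁻¹).val = algebraMap k (Module.End k V) c⁻¹ := by
        rw [hu, ← map_inv]
        simp [Units.mk0]
      rw [Units.val_mul, Module.End.mul_apply, hc, huinv,
        Module.algebraMap_end_apply, smul_smul, inv_mul_cancel₀ hc0, one_smul]
  choose f hf1 hf2 using key
  have hmul : ∀ a b : G, f (a * b) = f a * f b := by
    intro a b
    apply uniq
    · rw [hf1, map_mul, map_mul, hf1, hf1]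
    · exact hf2 _
    · rw [Units.val_mul, Module.End.mul_apply, hf2, hf2]
  refine ⟨MonoidHom.mk' f hmul, ?_, hf2⟩
  ext g
  exact hf1 g
end

section
/- Let α = e^{3πi/4} ∈ ℂ and let M be the 6×6 complex matrix whose nonzero entries are M₀₀ = α⁷, M₁₄ = −1, M₂₁ = M₃₂ = M₄₃ = M₅₅ = 1. Set p₂ = (0, 1, α³, α⁶, α, 0), p₃ = (2i, 1, α, α², α³, 0), p₄ = (−2i, 1, α, α², α³, 0) in ℂ⁶. Then the linear map x ↦ M·x maps the 2-dimensional subspace span_ℂ{p₂, p₃} onto itself, and likewise maps span_ℂ{p₂, p₄} onto itself. -/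
/-- `α = e^{3πi/4}`. -/
noncomputable def αc : ℂ := Complex.exp (3 * (Real.pi : ℂ) * Complex.I / 4)

/-- The 6×6 matrix `M` with nonzero entries `M₀₀ = α⁷`, `M₁₄ = −1`,
`M₂₁ = M₃₂ = M₄₃ = M₅₅ = 1`. -/
noncomputable def Mmat : Matrix (Fin 6) (Fin 6) ℂ :=
  !![αc ^ 7, 0, 0, 0, 0, 0;
     0, 0, 0, 0, -1, 0;
     0, 1, 0, 0, 0, 0;
     0, 0, 1, 0, 0, 0;
     0, 0, 0, 1, 0, 0;
     0, 0, 0, 0, 0, 1]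

noncomputable def p₂ : Fin 6 → ℂ := ![0, 1, αc ^ 3, αc ^ 6, αc, 0]
noncomputable def p₃ : Fin 6 → ℂ := ![2 * Complex.I, 1, αc, αc ^ 2, αc ^ 3, 0]
noncomputable def p₄ : Fin 6 → ℂ := ![-(2 * Complex.I), 1, αc, αc ^ 2, αc ^ 3, 0]

lemma alpha_pow4 : αc ^ 4 = -1 := by
  rw [αc, ← Complex.exp_nat_mul]
  have h : ((4 : ℕ) : ℂ) * (3 * (Real.pi : ℂ) * Complex.I / 4) =
      (Real.pi : ℂ) * Complex.I + ((Real.pi : ℂ) * Complex.I + (Real.pi : ℂ) * Complex.I) := by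
    push_cast; ring
  rw [h, Complex.exp_add, Complex.exp_add, Complex.exp_pi_mul_I]
  ring

lemma alpha_ne : αc ≠ 0 := Complex.exp_ne_zero _

lemma cv0 {α : Type*} (a b c d e f : α) : ![a, b, c, d, e, f] (0 : Fin 6) = a := rfl
lemma cv1 {α : Type*} (a b c d e f : α) : ![a, b, c, d, e, f] (1 : Fin 6) = b := rfl
lemma cv2 {α : Type*} (a b c d e f : α) : ![a, b, c, d, e, f] (2 : Fin 6) = c := rfl
lemma cv3 {α : Type*} (a b c d e f : α) : ![a, b, c, d, e, f] (3 : Fin 6) = d := rfl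
lemma cv4 {α : Type*} (a b c d e f : α) : ![a, b, c, d, e, f] (4 : Fin 6) = e := rfl
lemma cv5 {α : Type*} (a b c d e f : α) : ![a, b, c, d, e, f] (5 : Fin 6) = f := rfl

lemma eig2 : Mmat.mulVec p₂ = (-αc) • p₂ := by
  funext i
  fin_cases i
  · show Mmat.mulVec p₂ (0 : Fin 6) = ((-αc) • p₂) (0 : Fin 6)
    simp only [Mmat, p₂, Matrix.mulVec, dotProduct, Fin.sum_univ_six,
      Matrix.of_apply, Pi.smul_apply, smul_eq_mul, cv0, cv1, cv2, cv3, cv4, cv5]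
    ring
  · show Mmat.mulVec p₂ (1 : Fin 6) = ((-αc) • p₂) (1 : Fin 6)
    simp only [Mmat, p₂, Matrix.mulVec, dotProduct, Fin.sum_univ_six,
      Matrix.of_apply, Pi.smul_apply, smul_eq_mul, cv0, cv1, cv2, cv3, cv4, cv5]
    ring
  · show Mmat.mulVec p₂ (2 : Fin 6) = ((-αc) • p₂) (2 : Fin 6)
    simp only [Mmat, p₂, Matrix.mulVec, dotProduct, Fin.sum_univ_six,
      Matrix.of_apply, Pi.smul_apply, smul_eq_mul, cv0, cv1, cv2, cv3, cv4, cv5]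
    linear_combination alpha_pow4
  · show Mmat.mulVec p₂ (3 : Fin 6) = ((-αc) • p₂) (3 : Fin 6)
    simp only [Mmat, p₂, Matrix.mulVec, dotProduct, Fin.sum_univ_six,
      Matrix.of_apply, Pi.smul_apply, smul_eq_mul, cv0, cv1, cv2, cv3, cv4, cv5]
    linear_combination αc ^ 3 * alpha_pow4
  · show Mmat.mulVec p₂ (4 : Fin 6) = ((-αc) • p₂) (4 : Fin 6)
    simp only [Mmat, p₂, Matrix.mulVec, dotProduct, Fin.sum_univ_six,
      Matrix.of_apply, Pi.smul_apply, smul_eq_mul, cv0, cv1, cv2, cv3, cv4, cv5]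
    linear_combination αc ^ 2 * alpha_pow4
  · show Mmat.mulVec p₂ (5 : Fin 6) = ((-αc) • p₂) (5 : Fin 6)
    simp only [Mmat, p₂, Matrix.mulVec, dotProduct, Fin.sum_univ_six,
      Matrix.of_apply, Pi.smul_apply, smul_eq_mul, cv0, cv1, cv2, cv3, cv4, cv5]
    ring

lemma eig3 : Mmat.mulVec p₃ = (αc ^ 7) • p₃ := by
  funext i
  fin_cases i
  · show Mmat.mulVec p₃ (0 : Fin 6) = ((αc ^ 7) • p₃) (0 : Fin 6)
    simp only [Mmat, p₃, Matrix.mulVec, dotProduct, Fin.sum_univ_six,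
      Matrix.of_apply, Pi.smul_apply, smul_eq_mul, cv0, cv1, cv2, cv3, cv4, cv5]
    ring
  · show Mmat.mulVec p₃ (1 : Fin 6) = ((αc ^ 7) • p₃) (1 : Fin 6)
    simp only [Mmat, p₃, Matrix.mulVec, dotProduct, Fin.sum_univ_six,
      Matrix.of_apply, Pi.smul_apply, smul_eq_mul, cv0, cv1, cv2, cv3, cv4, cv5]
    linear_combination -αc ^ 3 * alpha_pow4
  · show Mmat.mulVec p₃ (2 : Fin 6) = ((αc ^ 7) • p₃) (2 : Fin 6)
    simp only [Mmat, p₃, Matrix.mulVec, dotProduct, Fin.sum_univ_six,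
      Matrix.of_apply, Pi.smul_apply, smul_eq_mul, cv0, cv1, cv2, cv3, cv4, cv5]
    linear_combination (1 - αc ^ 4) * alpha_pow4
  · show Mmat.mulVec p₃ (3 : Fin 6) = ((αc ^ 7) • p₃) (3 : Fin 6)
    simp only [Mmat, p₃, Matrix.mulVec, dotProduct, Fin.sum_univ_six,
      Matrix.of_apply, Pi.smul_apply, smul_eq_mul, cv0, cv1, cv2, cv3, cv4, cv5]
    linear_combination (αc - αc ^ 5) * alpha_pow4
  · show Mmat.mulVec p₃ (4 : Fin 6) = ((αc ^ 7) • p₃) (4 : Fin 6)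
    simp only [Mmat, p₃, Matrix.mulVec, dotProduct, Fin.sum_univ_six,
      Matrix.of_apply, Pi.smul_apply, smul_eq_mul, cv0, cv1, cv2, cv3, cv4, cv5]
    linear_combination (αc ^ 2 - αc ^ 6) * alpha_pow4
  · show Mmat.mulVec p₃ (5 : Fin 6) = ((αc ^ 7) • p₃) (5 : Fin 6)
    simp only [Mmat, p₃, Matrix.mulVec, dotProduct, Fin.sum_univ_six,
      Matrix.of_apply, Pi.smul_apply, smul_eq_mul, cv0, cv1, cv2, cv3, cv4, cv5]
    ring

lemma eig4 : Mmat.mulVec p₄ = (αc ^ 7) • p₄ := by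
  funext i
  fin_cases i
  · show Mmat.mulVec p₄ (0 : Fin 6) = ((αc ^ 7) • p₄) (0 : Fin 6)
    simp only [Mmat, p₄, Matrix.mulVec, dotProduct, Fin.sum_univ_six,
      Matrix.of_apply, Pi.smul_apply, smul_eq_mul, cv0, cv1, cv2, cv3, cv4, cv5]
    ring
  · show Mmat.mulVec p₄ (1 : Fin 6) = ((αc ^ 7) • p₄) (1 : Fin 6)
    simp only [Mmat, p₄, Matrix.mulVec, dotProduct, Fin.sum_univ_six,
      Matrix.of_apply, Pi.smul_apply, smul_eq_mul, cv0, cv1, cv2, cv3, cv4, cv5]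
    linear_combination -αc ^ 3 * alpha_pow4
  · show Mmat.mulVec p₄ (2 : Fin 6) = ((αc ^ 7) • p₄) (2 : Fin 6)
    simp only [Mmat, p₄, Matrix.mulVec, dotProduct, Fin.sum_univ_six,
      Matrix.of_apply, Pi.smul_apply, smul_eq_mul, cv0, cv1, cv2, cv3, cv4, cv5]
    linear_combination (1 - αc ^ 4) * alpha_pow4
  · show Mmat.mulVec p₄ (3 : Fin 6) = ((αc ^ 7) • p₄) (3 : Fin 6)
    simp only [Mmat, p₄, Matrix.mulVec, dotProduct, Fin.sum_univ_six,
      Matrix.of_apply, Pi.smul_apply, smul_eq_mul, cv0, cv1, cv2, cv3, cv4, cv5]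
    linear_combination (αc - αc ^ 5) * alpha_pow4
  · show Mmat.mulVec p₄ (4 : Fin 6) = ((αc ^ 7) • p₄) (4 : Fin 6)
    simp only [Mmat, p₄, Matrix.mulVec, dotProduct, Fin.sum_univ_six,
      Matrix.of_apply, Pi.smul_apply, smul_eq_mul, cv0, cv1, cv2, cv3, cv4, cv5]
    linear_combination (αc ^ 2 - αc ^ 6) * alpha_pow4
  · show Mmat.mulVec p₄ (5 : Fin 6) = ((αc ^ 7) • p₄) (5 : Fin 6)
    simp only [Mmat, p₄, Matrix.mulVec, dotProduct, Fin.sum_univ_six,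
      Matrix.of_apply, Pi.smul_apply, smul_eq_mul, cv0, cv1, cv2, cv3, cv4, cv5]
    ring

lemma span_pair_smul (c d : ℂ) (hc : c ≠ 0) (hd : d ≠ 0) (a b : Fin 6 → ℂ) :
    Submodule.span ℂ {c • a, d • b} = Submodule.span ℂ {a, b} := by
  have ma : a ∈ Submodule.span ℂ ({c • a, d • b} : Set (Fin 6 → ℂ)) := by
    have h := Submodule.smul_mem (Submodule.span ℂ ({c • a, d • b} : Set (Fin 6 → ℂ))) c⁻¹
      (Submodule.subset_span (Set.mem_insert _ _))
    rwa [smul_smul, inv_mul_cancel₀ hc, one_smul] at h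
  have mb : b ∈ Submodule.span ℂ ({c • a, d • b} : Set (Fin 6 → ℂ)) := by
    have h := Submodule.smul_mem (Submodule.span ℂ ({c • a, d • b} : Set (Fin 6 → ℂ))) d⁻¹
      (Submodule.subset_span (Set.mem_insert_of_mem _ rfl))
    rwa [smul_smul, inv_mul_cancel₀ hd, one_smul] at h
  apply le_antisymm
  · rw [Submodule.span_le]
    exact Set.insert_subset_iff.mpr ⟨Submodule.smul_mem _ c
        (Submodule.subset_span (Set.mem_insert _ _)),
      Set.singleton_subset_iff.mpr (Submodule.smul_mem _ d
        (Submodule.subset_span (Set.mem_insert_of_mem _ rfl)))⟩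
  · rw [Submodule.span_le]
    exact Set.insert_subset_iff.mpr ⟨ma, Set.singleton_subset_iff.mpr mb⟩

/-- The linear map `x ↦ M·x` maps `span{p₂, p₃}` onto itself and maps `span{p₂, p₄}` onto
itself: the lines `ℓ(p₂,p₃)` and `ℓ(p₂,p₄)` are invariant under the automorphism. -/
theorem invariant_lines :
    Submodule.map Mmat.mulVecLin (Submodule.span ℂ {p₂, p₃}) = Submodule.span ℂ {p₂, p₃} ∧
    Submodule.map Mmat.mulVecLin (Submodule.span ℂ {p₂, p₄}) = Submodule.span ℂ {p₂, p₄} := by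
  have hne : -αc ≠ 0 := neg_ne_zero.mpr alpha_ne
  have hne7 : αc ^ 7 ≠ 0 := pow_ne_zero _ alpha_ne
  constructor
  · rw [Submodule.map_span, Set.image_insert_eq, Set.image_singleton,
      Matrix.mulVecLin_apply, Matrix.mulVecLin_apply, eig2, eig3]
    exact span_pair_smul _ _ hne hne7 _ _
  · rw [Submodule.map_span, Set.image_insert_eq, Set.image_singleton,
      Matrix.mulVecLin_apply, Matrix.mulVecLin_apply, eig2, eig4]
    exact span_pair_smul _ _ hne hne7 _ _
end

section
/- Let π be a permutation of {0,1,2,3,4,5} that is a cycle of length 4 (i.e. π is a cycle whose support has exactly 4 elements), and let ε : {0,…,5} → ℚ be a function with ε(j) ∈ {1, −1} for all j. Let P be the 6×6 rational matrix with entries P(i, j) = ε(j) if i = π(j) and P(i, j) = 0 otherwise (a signed permutation matrix over π). Then P⁴ ≠ diag(−1, −1, −1, −1, −1, 1). -/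
/-!
A permutation of six points with support of size four fixes some `j ≠ 5`. At a fixed point `j`
the `(j, j)` entry of `P ^ k` is `ε j ^ k`, and a fourth power in `ℚ` is never `-1`.
-/

open Matrix

def generalizedPermMatrix {n R : Type*} [DecidableEq n] [Zero R] (π : Equiv.Perm n) (ε : n → R) :
    Matrix n n R :=
  of fun i j => if i = π j then ε j else 0

section GeneralizedPermMatrix

variable {m n R : Type*} [Fintype n] [DecidableEq n]

theorem mul_generalizedPermMatrix_apply [NonUnitalNonAssocSemiring R] (M : Matrix m n R)
    (π : Equiv.Perm n) (ε : n → R) (i : m) (j : n) :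
    (M * generalizedPermMatrix π ε) i j = M i (π j) * ε j := by
  simp [generalizedPermMatrix, mul_apply, mul_ite]

theorem generalizedPermMatrix_pow_apply_of_apply_eq_self [Semiring R] {π : Equiv.Perm n}
    (ε : n → R) {j : n} (hj : π j = j) (k : ℕ) :
    (generalizedPermMatrix π ε ^ k) j j = ε j ^ k := by
  induction k with
  | zero => simp
  | succ k ih => rw [pow_succ, mul_generalizedPermMatrix_apply, hj, ih, pow_succ]

end GeneralizedPermMatrix

theorem Equiv.Perm.exists_ne_apply_eq_self_of_card_support_add_one_lt {α : Type*} [Fintype α]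
    [DecidableEq α] {π : Equiv.Perm α} (h : π.support.card + 1 < Fintype.card α) (a : α) :
    ∃ b ≠ a, π b = b := by
  have hcompl : 1 < π.supportᶜ.card := by
    rw [Finset.card_compl]
    omega
  obtain ⟨b, hb, hba⟩ := Finset.exists_mem_ne hcompl a
  exact ⟨b, hba, by simpa using hb⟩

theorem signed_four_cycle_fourth_power_ne_general (π : Equiv.Perm (Fin 6))
    (hsupp : π.support.card = 4)
    (ε : Fin 6 → ℚ) :
    (Matrix.of fun i j => if i = π j then ε j else 0 : Matrix (Fin 6) (Fin 6) ℚ) ^ 4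
      ≠ Matrix.diagonal ![-1, -1, -1, -1, -1, 1] := by
  change generalizedPermMatrix π ε ^ 4 ≠ _
  obtain ⟨j, hj5, hfix⟩ :=
    π.exists_ne_apply_eq_self_of_card_support_add_one_lt (by simp [hsupp]) 5
  intro h
  have hjj := congrFun₂ h j j
  rw [generalizedPermMatrix_pow_apply_of_apply_eq_self ε hfix,
    diagonal_apply_eq] at hjj
  have hdiag : ![-1, -1, -1, -1, -1, (1 : ℚ)] j = -1 := by
    fin_cases j <;> simp_all
  have hnonneg : (0 : ℚ) ≤ ε j ^ 4 := Even.pow_nonneg (by decide) _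
  linarith

/-- Let `π` be a permutation of `{0,…,5}` that is a cycle whose support has exactly four
elements, and let `ε` take values in `{1, −1}`.  Then the fourth power of the signed
permutation matrix `P(i,j) = ε(j)` if `i = π(j)`, `0` otherwise, is never
`diag(−1,−1,−1,−1,−1,1)`. -/
theorem signed_four_cycle_fourth_power_ne (π : Equiv.Perm (Fin 6))
    (hcyc : π.IsCycle) (hsupp : π.support.card = 4)
    (ε : Fin 6 → ℚ) (hε : ∀ j, ε j = 1 ∨ ε j = -1) :
    (Matrix.of fun i j => if i = π j then ε j else 0 : Matrix (Fin 6) (Fin 6) ℚ) ^ 4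
      ≠ Matrix.diagonal ![-1, -1, -1, -1, -1, 1] :=
  signed_four_cycle_fourth_power_ne_general π hsupp ε
end
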